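/- One-step simulation for the Searching AM: if ⌊s⌋ →wh u, then there exists a state s' such that s →@l* →rβ s' and ⌊s'⌋ = u. -/
import Mathlib


/-- Lambda terms with named variables. -/
inductive Term : Type
  | var : ℕ → Term
  | lam : ℕ → Term → Term
  | app : Term → Term → Term
deriving DecidableEq

namespace Term

/-- Size: the number of constructors. -/
def size : Term → ℕ
  | var _ => 1
  | lam _ t => t.size + 1
  | app t s => t.size + s.size + 1

/-- Substitution (stopping at matching binders). -/
def subst (x : ℕ) (u : Term) : Term → Term
  | var y => if y = x then u else var y
  | lam y t => if y = x then lam y t else lam y (subst x u t)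
  | app t s => app (subst x u t) (subst x u s)

end Term

/-- Beta reduction: compatible closure of the root beta rule. -/
inductive Beta : Term → Term → Prop
  | beta (x : ℕ) (t u : Term) : Beta (.app (.lam x t) u) (Term.subst x u t)
  | appL {t t' : Term} (u : Term) : Beta t t' → Beta (.app t u) (.app t' u)
  | appR {u u' : Term} (t : Term) : Beta u u' → Beta (.app t u) (.app t u')
  | lam {t t' : Term} (x : ℕ) : Beta t t' → Beta (.lam x t) (.lam x t')

/-- Weak head reduction. -/
inductive Wh : Term → Term → Prop
  | beta (x : ℕ) (t u : Term) : Wh (.app (.lam x t) u) (Term.subst x u t)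
  | appL {t t' : Term} (u : Term) : Wh t t' → Wh (.app t u) (.app t' u)

/-- `StepN R n a b`: `a` reduces to `b` in exactly `n` `R`-steps. -/
inductive StepN {α : Type} (R : α → α → Prop) : ℕ → α → α → Prop
  | refl (a : α) : StepN R 0 a a
  | step {a b c : α} {n : ℕ} : R a b → StepN R n b c → StepN R (n + 1) a c

/-- States of the Searching Abstract Machine: a code and an argument stack. -/
abbrev SState : Type := Term × List Term

/-- Decoding of Searching AM states. -/
def decode : Term → List Term → Term
  | t, [] => t
  | t, u :: π => decode (.app t u) π

/-- The overhead (searching) transition `→@l`. -/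
inductive SApp : SState → SState → Prop
  | mk (t u : Term) (π : List Term) : SApp (.app t u, π) (t, u :: π)

/-- The beta transition `→rβ`. -/
inductive SBeta : SState → SState → Prop
  | mk (x : ℕ) (t u : Term) (π : List Term) :
      SBeta (.lam x t, u :: π) (Term.subst x u t, π)

/-- The transition relation of the Searching AM. -/
inductive SStep : SState → SState → Prop
  | appl {s s' : SState} : SApp s s' → SStep s s'
  | beta {s s' : SState} : SBeta s s' → SStep s s'

private lemma stuck_aux : ∀ (π : List Term) (t : Term),
    (∀ x b, t ≠ .lam x b) → (∀ u, ¬ Wh t u) → ∀ u, ¬ Wh (decode t π) u := by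
  intro π
  induction π with
  | nil => intro t _ hnw u h; exact hnw u h
  | cons a π ih =>
    intro t hnl hnw u h
    refine ih (.app t a) (by intro x b hb; cases hb) ?_ u h
    intro v hv
    cases hv with
    | beta x tb ub => exact hnl x tb rfl
    | appL _ h' => exact hnw _ h'

private lemma det_aux : ∀ (π : List Term) (t t0 : Term),
    Wh t t0 → (∀ t1, Wh t t1 → t1 = t0) → ∀ u, Wh (decode t π) u → u = decode t0 π := by
  intro π
  induction π with
  | nil => intro t t0 _ huniq u h; exact huniq u h
  | cons a π ih =>
    intro t t0 hstep huniq u h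
    refine ih (.app t a) (.app t0 a) (Wh.appL a hstep) ?_ u h
    intro t1 h1
    cases h1 with
    | beta x tb ub => cases hstep
    | appL _ h' => rw [huniq _ h']

private lemma sim_aux : ∀ (t : Term) (π : List Term) (u : Term),
    Wh (decode t π) u → ∃ s1 s' : SState,
      Relation.ReflTransGen SApp (t, π) s1 ∧ SBeta s1 s' ∧ decode s'.1 s'.2 = u := by
  intro t
  induction t with
  | var n =>
    intro π u h
    exact absurd h (stuck_aux π _ (by intro x b hb; cases hb) (by intro v hv; cases hv) u)
  | lam x b _ =>
    intro π u h
    cases π with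
    | nil => cases h
    | cons a π' =>
      refine ⟨(.lam x b, a :: π'), (Term.subst x a b, π'), .refl, SBeta.mk x b a π', ?_⟩
      have : u = decode (Term.subst x a b) π' := by
        refine det_aux π' (.app (.lam x b) a) _ (Wh.beta x b a) ?_ u h
        intro t1 h1
        cases h1 with
        | beta => rfl
        | appL _ h' => cases h'
      exact this.symm
  | app t1 t2 ih1 _ =>
    intro π u h
    obtain ⟨s1, s', h1, h2, h3⟩ := ih1 (t2 :: π) u h
    exact ⟨s1, s', .head (SApp.mk t1 t2 π) h1, h2, h3⟩

/-- one-step simulation for the Searching AM: if `⌊s⌋ →wh u` then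
    `s →@l* →rβ s'` with `⌊s'⌋ = u`. -/
theorem searching_one_step_simulation (s : SState) (u : Term)
    (h : Wh (decode s.1 s.2) u) :
    ∃ s1 s' : SState,
      Relation.ReflTransGen SApp s s1 ∧ SBeta s1 s' ∧ decode s'.1 s'.2 = u := by
  obtain ⟨t, π⟩ := s
  exact sim_aux t π u h
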